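/- (Lemma 1.) Fix K, M ∈ ℕ and d : Fin K → ℕ; for each k let F̄ₖ ∈ ℂ^{M×d_k}, Ḡₖ ∈ ℂ^{M×d_k}, and for each ordered pair (l,k) with l ≠ k let H̄_{lk} ∈ ℂ^{d_k×d_l}. Define IL(r) = Σ_{l≠k} ‖H̄_{lk} + F̄ₖᴴ diag(r) Ḡₗ‖_F² and Σ = Σ_{l≠k} (F̄ₖF̄ₖᴴ) ⊙ (ḠₗḠₗᴴ)*. Suppose r₀ ∈ ℂ^M satisfies IL(r₀) = 0, let u ∈ ℂ^M lie in the column space of Σ (i.e., u = Σ.mulVec v for some v), and set α = star(u) ⬝ᵥ r₀. If there exists r ∈ ℂ^M with |r_m| = 1 for all m and IL(r) = 0, then α lies in the annulus max(2·max_m |u_m| − Σ_m |u_m|, 0) ≤ |α| ≤ Σ_m |u_m|. -/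

import Mathlib

/-!
If `IL` vanishes at `r₀` and at a unit-modulus `r`, then every cross term
`F̄ₖᴴ diag(r₀ - r) Ḡₗ` vanishes. Since `((F Fᴴ) ⊙ (G Gᴴ)*) x` is the diagonal of
`F (Fᴴ diag(x) G) Gᴴ`, this puts `r₀ - r` in the kernel of the Hermitian matrix `Σ`, hence
orthogonal to its column space, so `α = uᴴ r = ∑ₘ ū_m r_m` is a sum of complex numbers of
moduli `|u_m|`. The triangle inequality, applied to the whole sum and to its largest term
against the rest, gives the annulus.
-/

open Matrix

section Annulus

variable {ι E : Type*} [Fintype ι] [SeminormedAddCommGroup E]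

theorem two_mul_norm_sub_sum_norm_le_norm_sum [DecidableEq ι] (w : ι → E) (i : ι) :
    2 * ‖w i‖ - ∑ j, ‖w j‖ ≤ ‖∑ j, w j‖ :=
  calc 2 * ‖w i‖ - ∑ j, ‖w j‖ = ‖w i‖ - ∑ j ∈ Finset.univ.erase i, ‖w j‖ := by
        rw [← Finset.add_sum_erase _ _ (Finset.mem_univ i)]; ring
    _ ≤ ‖w i‖ - ‖∑ j ∈ Finset.univ.erase i, w j‖ := by gcongr; exact norm_sum_le _ _
    _ ≤ ‖w i + ∑ j ∈ Finset.univ.erase i, w j‖ := norm_sub_le_norm_add _ _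
    _ = ‖∑ j, w j‖ := by rw [Finset.add_sum_erase _ _ (Finset.mem_univ i)]

theorem two_mul_iSup_norm_sub_sum_norm_le_norm_sum (w : ι → E) :
    2 * (⨆ i, ‖w i‖) - ∑ i, ‖w i‖ ≤ ‖∑ i, w i‖ := by
  classical
  have hsup : (⨆ i, ‖w i‖) ≤ (‖∑ i, w i‖ + ∑ i, ‖w i‖) / 2 :=
    Real.iSup_le (fun i => by linarith [two_mul_norm_sub_sum_norm_le_norm_sum w i])
      (by positivity)
  linarith

theorem norm_star_dotProduct_mem_annulus (u r : ι → ℂ) (hr : ∀ m, ‖r m‖ = 1) :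
    max (2 * (⨆ m, ‖u m‖) - ∑ m, ‖u m‖) 0 ≤ ‖star u ⬝ᵥ r‖ ∧
      ‖star u ⬝ᵥ r‖ ≤ ∑ m, ‖u m‖ := by
  have hsum : star u ⬝ᵥ r = ∑ m, star (u m) * r m := rfl
  have hnorm : ∀ m, ‖star (u m) * r m‖ = ‖u m‖ := fun m => by
    rw [norm_mul, hr m, mul_one, norm_star]
  have hlower := two_mul_iSup_norm_sub_sum_norm_le_norm_sum fun m => star (u m) * r m
  have hupper := norm_sum_le Finset.univ fun m => star (u m) * r m
  simp only [hnorm] at hlower hupper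
  rw [hsum]
  exact ⟨max_le hlower (norm_nonneg _), hupper⟩

end Annulus

theorem Matrix.IsHermitian.star_mulVec_dotProduct_eq_zero {n : Type*} [Fintype n]
    {S : Matrix n n ℂ} (hS : S.IsHermitian) {x : n → ℂ} (hx : S *ᵥ x = 0) (v : n → ℂ) :
    star (S *ᵥ v) ⬝ᵥ x = 0 := by
  rw [star_mulVec, ← dotProduct_mulVec, hS.eq, hx, dotProduct_zero]

section Gram

variable {m p q : Type*} [Fintype p] [Fintype q]

theorem isHermitian_hadamard_gram (F : Matrix m p ℂ) (G : Matrix m q ℂ) :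
    ((F * Fᴴ) ⊙ (G * Gᴴ).map (starRingEnd ℂ)).IsHermitian :=
  (isHermitian_mul_conjTranspose_self F).hadamard
    ((isHermitian_mul_conjTranspose_self G).map _ fun _ => rfl)

theorem hadamard_gram_mulVec [Fintype m] [DecidableEq m] (F : Matrix m p ℂ) (G : Matrix m q ℂ)
    (x : m → ℂ) :
    ((F * Fᴴ) ⊙ (G * Gᴴ).map (starRingEnd ℂ)) *ᵥ x =
      fun n => (F * (Fᴴ * diagonal x * G) * Gᴴ) n n := by
  ext n
  simp only [mulVec, dotProduct, hadamard, mul_apply, map_apply, conjTranspose_apply,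
    map_sum, map_mul, starRingEnd_apply, star_star, Finset.sum_mul, Finset.mul_sum, of_apply,
    diagonal_apply, mul_ite, mul_zero, Finset.sum_ite_eq', Finset.mem_univ, if_true]
  rw [Finset.sum_comm]
  refine Finset.sum_congr rfl fun j _ => ?_
  rw [Finset.sum_comm]
  exact Finset.sum_congr rfl fun i _ => Finset.sum_congr rfl fun k _ => by ring

end Gram

theorem sum_sum_norm_sq_eq_zero_iff {α β E : Type*} [Fintype α] [Fintype β]
    [NormedAddCommGroup E] (A : Matrix α β E) : ∑ i, ∑ j, ‖A i j‖ ^ 2 = 0 ↔ A = 0 := by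
  rw [Finset.sum_eq_zero_iff_of_nonneg fun i _ => by positivity, ← Matrix.ext_iff]
  simp [Finset.sum_eq_zero_iff_of_nonneg]

section OffDiagonal

variable {ι : Type*} [Fintype ι] [DecidableEq ι]

theorem sum_offDiag_eq_zero_iff {f : ι → ι → ℝ} (hf : ∀ l k, 0 ≤ f l k) :
    (∑ l, ∑ k, if l ≠ k then f l k else 0) = 0 ↔ ∀ l k, l ≠ k → f l k = 0 := by
  have hnonneg : ∀ l k, 0 ≤ if l ≠ k then f l k else 0 := fun l k => by
    split_ifs <;> simp [hf]
  rw [Finset.sum_eq_zero_iff_of_nonneg fun l _ => Finset.sum_nonneg fun k _ => hnonneg l k]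
  simp only [Finset.sum_eq_zero_iff_of_nonneg fun k _ => hnonneg _ k, Finset.mem_univ,
    forall_const, ite_eq_right_iff]

theorem sum_offDiag_sum_sum_norm_sq_eq_zero_iff {E : Type*} [NormedAddCommGroup E]
    {α β : ι → ι → Type*} [∀ l k, Fintype (α l k)] [∀ l k, Fintype (β l k)]
    (A : (l k : ι) → Matrix (α l k) (β l k) E) :
    (∑ l, ∑ k, if l ≠ k then ∑ i, ∑ j, ‖A l k i j‖ ^ 2 else 0) = 0 ↔
      ∀ l k, l ≠ k → A l k = 0 := by
  rw [sum_offDiag_eq_zero_iff fun l k =>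
    Finset.sum_nonneg fun i _ => Finset.sum_nonneg fun j _ => sq_nonneg _]
  simp only [sum_sum_norm_sq_eq_zero_iff]

variable {m : Type*}
  {p q : ι → Type*} [∀ k, Fintype (p k)] [∀ k, Fintype (q k)]

theorem isHermitian_sum_offDiag_hadamard_gram (F : (k : ι) → Matrix m (p k) ℂ)
    (G : (k : ι) → Matrix m (q k) ℂ) :
    (∑ l, ∑ k, if l ≠ k then
      (F k * (F k)ᴴ) ⊙ (G l * (G l)ᴴ).map (starRingEnd ℂ) else 0).IsHermitian := by
  refine Finset.sum_induction _ IsHermitian (fun _ _ => IsHermitian.add) isHermitian_zero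
    fun l _ => Finset.sum_induction _ IsHermitian (fun _ _ => IsHermitian.add) isHermitian_zero
      fun k _ => ?_
  split_ifs
  · exact isHermitian_hadamard_gram (F k) (G l)
  · exact isHermitian_zero

theorem sum_offDiag_hadamard_gram_mulVec_eq_zero [Fintype m] [DecidableEq m]
    (F : (k : ι) → Matrix m (p k) ℂ) (G : (k : ι) → Matrix m (q k) ℂ) (x : m → ℂ)
    (hx : ∀ l k, l ≠ k → (F k)ᴴ * diagonal x * G l = 0) :
    (∑ l, ∑ k, if l ≠ k then
      (F k * (F k)ᴴ) ⊙ (G l * (G l)ᴴ).map (starRingEnd ℂ) else 0) *ᵥ x = 0 := by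
  simp only [sum_mulVec]
  refine Finset.sum_eq_zero fun l _ => Finset.sum_eq_zero fun k _ => ?_
  split_ifs with hlk
  · rw [hadamard_gram_mulVec, hx l k hlk, Matrix.mul_zero, Matrix.zero_mul]
    rfl
  · exact zero_mulVec x

end OffDiagonal

/-- Lemma 1 (necessary condition for a unit-modulus RIS achieving zero IL):
if `IL r₀ = 0`, `u` is in the column space of `Σ`, `α = uᴴ r₀`, and there is a
unit-modulus `r` with `IL r = 0`, then `α` lies in the annulus
`max (2 max_m |u m| - Σ_m |u m|) 0 ≤ |α| ≤ Σ_m |u m|`. -/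
theorem lemma1_annulus_necessary (K M : ℕ) (d : Fin K → ℕ)
    (F : (k : Fin K) → Matrix (Fin M) (Fin (d k)) ℂ)
    (G : (k : Fin K) → Matrix (Fin M) (Fin (d k)) ℂ)
    (H : (l k : Fin K) → Matrix (Fin (d k)) (Fin (d l)) ℂ)
    (IL : (Fin M → ℂ) → ℝ)
    (hIL : ∀ r, IL r = ∑ l, ∑ k, if l ≠ k then
      ∑ i, ∑ j, ‖(H l k + (F k)ᴴ * Matrix.diagonal r * G l) i j‖ ^ 2 else 0)
    (Sig : Matrix (Fin M) (Fin M) ℂ)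
    (hSig : Sig = ∑ l, ∑ k, if l ≠ k then
      Matrix.hadamard (F k * (F k)ᴴ) ((G l * (G l)ᴴ).map (starRingEnd ℂ)) else 0)
    (r₀ : Fin M → ℂ) (hr₀ : IL r₀ = 0)
    (u v : Fin M → ℂ) (hu : u = Sig.mulVec v)
    (α : ℂ) (hα : α = star u ⬝ᵥ r₀)
    (hfeas : ∃ r : Fin M → ℂ, (∀ m, ‖r m‖ = 1) ∧ IL r = 0) :
    max (2 * (⨆ m, ‖u m‖) - ∑ m, ‖u m‖) 0 ≤ ‖α‖ ∧
      ‖α‖ ≤ ∑ m, ‖u m‖ := by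
  obtain ⟨r, hr_unit, hr⟩ := hfeas
  rw [hIL, sum_offDiag_sum_sum_norm_sq_eq_zero_iff] at hr₀ hr
  have hcross : ∀ l k, l ≠ k → (F k)ᴴ * diagonal (r₀ - r) * G l = 0 := fun l k hlk => by
    rw [show diagonal (r₀ - r) = diagonal r₀ - diagonal r from (diagonal_sub r₀ r).symm,
      Matrix.mul_sub, Matrix.sub_mul, ← add_sub_add_left_eq_sub _ _ (H l k),
      hr₀ l k hlk, hr l k hlk, sub_zero]
  have hker : Sig *ᵥ (r₀ - r) = 0 :=
    hSig ▸ sum_offDiag_hadamard_gram_mulVec_eq_zero F G _ hcross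
  have hα_r : α = star u ⬝ᵥ r := by
    rw [hα, ← sub_eq_zero, ← dotProduct_sub, hu]
    have hSig_herm : Sig.IsHermitian := hSig ▸ isHermitian_sum_offDiag_hadamard_gram F G
    exact hSig_herm.star_mulVec_dotProduct_eq_zero hker v
  exact hα_r ▸ norm_star_dotProduct_mem_annulus u r hr_unit
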